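/- arXiv:2011.03768 — 5 statements merged into one kernel-verified Lean document; each statement's English description precedes it below -/
import Mathlib

section
/- Let A be an f-algebra with identity element e, and let E be a vector lattice with the principal projection property. Let a be a positive element of A, and suppose that π from the linear span of {e, a, a²} to the order bounded linear operators on E is a positive linear map with π(e) = I (the identity operator). Then π(a) is an orthomorphism on E (i.e., π(a) is order bounded and band preserving). -/
open Filter

section Defs

variable {E : Type*} [Lattice E] [AddCommGroup E]
  [CovariantClass E E (· + ·) (· ≤ ·)]

/-- Order convergence of a net, via a downward directed set of dominating elements
with infimum `0` (equivalent to the usual definition with an auxiliary net `y_β ↓ 0`). -/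
def OrderTendsto {ι : Type*} [Preorder ι] (x : ι → E) (l : E) : Prop :=
  ∃ D : Set E, D.Nonempty ∧ DirectedOn (· ≥ ·) D ∧ IsGLB D 0 ∧
    ∀ d ∈ D, ∃ a0 : ι, ∀ a : ι, a0 ≤ a → |x a - l| ≤ d

/-- Unbounded order convergence of a net. -/
def UOTendsto {ι : Type*} [Preorder ι] (x : ι → E) (l : E) : Prop :=
  ∀ y : E, 0 ≤ y → OrderTendsto (fun a => |x a - l| ⊓ y) 0

/-- Dedekind completeness. -/
def DedekindComplete (E : Type*) [Preorder E] : Prop :=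
  ∀ s : Set E, s.Nonempty → BddAbove s → ∃ u, IsLUB s u

variable [Module ℝ E]

/-- An order bounded linear operator. -/
def IsOrderBoundedMap (f : E →ₗ[ℝ] E) : Prop :=
  ∀ x : E, 0 ≤ x → ∃ b : E, ∀ y ∈ Set.Icc (-x) x, |f y| ≤ b

/-- An orthomorphism: an order bounded, band preserving linear operator. -/
def IsOrthomorphism (f : E →ₗ[ℝ] E) : Prop :=
  IsOrderBoundedMap f ∧ ∀ x y : E, |x| ⊓ |y| = 0 → |f x| ⊓ |y| = 0

/-- An order continuous linear operator. -/
def IsOrderContinuousMap (f : E →ₗ[ℝ] E) : Prop :=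
  ∀ {ι : Type*} [Preorder ι] (x : ι → E) (l : E),
    OrderTendsto x l → OrderTendsto (fun a => f (x a)) (f l)

end Defs

/-!
For `0 ≤ a` and `n : ℕ` put `b = (a - n)⁺`. Disjoint positive elements of an `f`-algebra
multiply to zero, so `a * b = b * b + n b ≥ n b`; with `a * b ≤ a * a` (as `0 ≤ b ≤ a`) and
`a = a ⊓ n + b` this gives `n a ≤ n² + a²`, the integral form of `a ≤ a ∧ n e + a² / n`.
Positivity of `π` turns it into `n T x ≤ n² x + S x` for `T = π a`, `S = π a²` and `x ≥ 0`.
If `x ⊥ y`, then `n (T x ⊓ y) ≤ (n² x + S x) ⊓ n y ≤ S x` for every `n`, and since the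
principal projection property makes `E` Archimedean, `T x ⊓ y = 0`.
-/

section FAlgebra

variable {A : Type*} [Lattice A] [Ring A]

theorem mul_eq_zero_of_inf_eq_zero
    (hf : ∀ a b c : A, a ⊓ b = 0 → 0 ≤ c → (c * a) ⊓ b = 0 ∧ (a * c) ⊓ b = 0)
    {u v : A} (hu : 0 ≤ u) (hv : 0 ≤ v) (h : u ⊓ v = 0) : u * v = 0 := by
  have huv : v ⊓ (u * v) = 0 := by rw [inf_comm]; exact (hf u v v h hv).2
  simpa using (hf v (u * v) u huv hu).1

variable [AddLeftMono A]
  (hmul_pos : ∀ a b : A, 0 ≤ a → 0 ≤ b → 0 ≤ a * b)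
  (hf : ∀ a b c : A, a ⊓ b = 0 → 0 ≤ c → (c * a) ⊓ b = 0 ∧ (a * c) ⊓ b = 0)
include hmul_pos hf

theorem one_nonneg_of_mul_nonneg : (0 : A) ≤ 1 := by
  have hneg : (1 : A)⁻ = -((1 : A)⁻ * (1 : A)⁻) := by
    calc (1 : A)⁻ = ((1 : A)⁺ - (1 : A)⁻) * (1 : A)⁻ := by rw [posPart_sub_negPart, one_mul]
      _ = -((1 : A)⁻ * (1 : A)⁻) := by
        rw [sub_mul, mul_eq_zero_of_inf_eq_zero hf (posPart_nonneg _) (negPart_nonneg _)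
          (posPart_inf_negPart_eq_zero _), zero_sub]
  have hneg_zero : (1 : A)⁻ = 0 :=
    le_antisymm (hneg ▸ neg_nonpos.2 (hmul_pos _ _ (negPart_nonneg _) (negPart_nonneg _)))
      (negPart_nonneg _)
  have hpos : (1 : A)⁺ = 1 := by simpa [hneg_zero] using posPart_sub_negPart (1 : A)
  exact hpos ▸ posPart_nonneg _

theorem nsmul_posPart_sub_le_mul_self {a : A} (ha : 0 ≤ a) (n : ℕ) :
    n • (a - n • (1 : A))⁺ ≤ a * a := by
  set b := (a - n • (1 : A))⁺
  have hb : 0 ≤ b := posPart_nonneg _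
  have hba : b ≤ a := by
    have : 0 ≤ a - b := by
      rw [← inf_eq_sub_posPart_sub]
      exact le_inf ha (nsmul_nonneg (one_nonneg_of_mul_nonneg hmul_pos hf) n)
    exact sub_nonneg.1 this
  have hab : a * b = b * b + n • b := by
    have hcb : (a - n • (1 : A))⁻ * b = 0 :=
      mul_eq_zero_of_inf_eq_zero hf (negPart_nonneg _) hb (by
        rw [inf_comm]; exact posPart_inf_negPart_eq_zero _)
    calc a * b = (b - (a - n • (1 : A))⁻ + n • 1) * b := by rw [posPart_sub_negPart]; abel_nf
      _ = b * b + n • b := by rw [add_mul, sub_mul, hcb, sub_zero, smul_mul_assoc, one_mul]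
  calc n • b ≤ a * b := hab ▸ le_add_of_nonneg_left (hmul_pos b b hb hb)
    _ ≤ a * a := sub_nonneg.1 (mul_sub a a b ▸ hmul_pos a (a - b) ha (sub_nonneg.2 hba))

theorem nsmul_le_nsmul_one_add_mul_self {a : A} (ha : 0 ≤ a) (n : ℕ) :
    n • a ≤ (n * n) • (1 : A) + a * a := by
  have hsplit : n • a = n • (a ⊓ n • (1 : A)) + n • (a - n • (1 : A))⁺ := by
    rw [inf_eq_sub_posPart_sub, ← smul_add, sub_add_cancel]
  rw [hsplit, mul_comm, mul_nsmul]
  exact add_le_add (nsmul_le_nsmul_right inf_le_right n)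
    (nsmul_posPart_sub_le_mul_self hmul_pos hf ha n)

end FAlgebra

section LatticeGroup

variable {G : Type*} [Lattice G] [AddCommGroup G] [AddLeftMono G]

theorem add_inf_le_inf_add_inf {u v w : G} (hu : 0 ≤ u) (hv : 0 ≤ v) (hw : 0 ≤ w) :
    (u + v) ⊓ w ≤ u ⊓ w + v ⊓ w := by
  rw [add_inf]
  refine le_inf ?_ (inf_le_right.trans (le_add_of_nonneg_left (le_inf hu hw)))
  calc (u + v) ⊓ w ≤ (u + v) ⊓ (w + v) := inf_le_inf_left _ (le_add_of_nonneg_right hv)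
    _ = u ⊓ w + v := (inf_add _ _ _).symm

theorem nsmul_inf_eq_zero {x y : G} (hx : 0 ≤ x) (hy : 0 ≤ y) (h : x ⊓ y = 0) (n : ℕ) :
    (n • x) ⊓ y = 0 := by
  induction n with
  | zero => simpa using hy
  | succ n ih =>
    refine le_antisymm ?_ (le_inf (nsmul_nonneg hx _) hy)
    calc ((n + 1) • x) ⊓ y ≤ (n • x) ⊓ y + x ⊓ y :=
          succ_nsmul x n ▸ add_inf_le_inf_add_inf (nsmul_nonneg hx n) hx hy
      _ = 0 := by rw [ih, h, add_zero]

theorem nsmul_inf_nsmul_eq_zero {x y : G} (hx : 0 ≤ x) (hy : 0 ≤ y) (h : x ⊓ y = 0)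
    (m n : ℕ) : (m • x) ⊓ (n • y) = 0 := by
  have hxy : y ⊓ (m • x) = 0 := by rw [inf_comm]; exact nsmul_inf_eq_zero hx hy h m
  rw [inf_comm]; exact nsmul_inf_eq_zero hy (nsmul_nonneg hx m) hxy n

theorem eq_zero_of_isLUB_range_nsmul {u s : G} (hu : 0 ≤ u)
    (hs : IsLUB (Set.range fun n : ℕ => n • u) s) : u = 0 := by
  have hsu : s ≤ s - u := hs.2 <| by
    rintro _ ⟨n, rfl⟩
    exact le_sub_iff_add_le.2 (succ_nsmul u n ▸ hs.1 ⟨n + 1, rfl⟩)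
  exact le_antisymm (by simpa using hsu) hu

variable (hppp : ∀ x y : G, 0 ≤ y → ∃ s : G, IsLUB {z | ∃ n : ℕ, z = y ⊓ (n • |x|)} s)
include hppp

theorem eq_zero_of_forall_nsmul_le {u v : G} (hu : 0 ≤ u) (hb : ∀ n : ℕ, n • u ≤ v) :
    u = 0 := by
  obtain ⟨s, hs⟩ := hppp u v (by simpa using hb 0)
  have hrange : {z | ∃ n : ℕ, z = v ⊓ (n • |u|)} = Set.range fun n : ℕ => n • u := by
    ext z
    simp [abs_of_nonneg hu, inf_eq_right.2 (hb _), eq_comm]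
  exact eq_zero_of_isLUB_range_nsmul hu (hrange ▸ hs)

theorem inf_eq_zero_of_forall_nsmul_le {x y t s : G} (hx : 0 ≤ x) (hy : 0 ≤ y) (ht : 0 ≤ t)
    (hxy : x ⊓ y = 0) (h : ∀ n : ℕ, n • t ≤ (n * n) • x + s) : t ⊓ y = 0 := by
  have hs : 0 ≤ s := by simpa using h 0
  refine eq_zero_of_forall_nsmul_le hppp (v := s) (le_inf ht hy) fun n => ?_
  calc n • (t ⊓ y) ≤ ((n * n) • x + s) ⊓ n • y :=
        le_inf ((nsmul_le_nsmul_right inf_le_left n).trans (h n))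
          (nsmul_le_nsmul_right inf_le_right n)
    _ ≤ ((n * n) • x) ⊓ n • y + s ⊓ n • y :=
        add_inf_le_inf_add_inf (nsmul_nonneg hx _) hs (nsmul_nonneg hy n)
    _ ≤ s := by rw [nsmul_inf_nsmul_eq_zero hx hy hxy, zero_add]; exact inf_le_left

end LatticeGroup

theorem abs_map_le_map_abs {G H 𝓕 : Type*} [Lattice G] [AddCommGroup G] [AddLeftMono G]
    [Lattice H] [AddCommGroup H] [AddLeftMono H] [FunLike 𝓕 G H] [AddMonoidHomClass 𝓕 G H] (T : 𝓕)
    (hT : ∀ x, 0 ≤ x → 0 ≤ T x) (x : G) : |T x| ≤ T |x| := by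
  refine abs_le'.2 ⟨?_, ?_⟩
  · exact sub_nonneg.1 (map_sub T |x| x ▸ hT _ (sub_nonneg.2 (le_abs_self x)))
  · exact neg_le_iff_add_nonneg.2
      (map_add T |x| x ▸ hT _ (neg_le_iff_add_nonneg.1 (neg_le_abs x)))

/-- Let `A` be an `f`-algebra with identity element `e = 1`, and `E` a
vector lattice with the principal projection property (expressed via existence of the
sups `⨆ n, y ⊓ n|x|` giving the band projections).  If `π` is a positive linear map
from `span {1, a, a²}` into the order bounded operators on `E` with `π 1 = I`, where
`0 ≤ a`, then `π a` is an orthomorphism on `E`. -/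
theorem stmt0 {A E : Type*}
    [Lattice A] [Ring A] [Module ℝ A] [CovariantClass A A (· + ·) (· ≤ ·)]
    -- `A` is an `f`-algebra:
    (hmul_pos : ∀ a b : A, 0 ≤ a → 0 ≤ b → 0 ≤ a * b)
    (hf : ∀ a b c : A, a ⊓ b = 0 → 0 ≤ c → (c * a) ⊓ b = 0 ∧ (a * c) ⊓ b = 0)
    [Lattice E] [AddCommGroup E] [CovariantClass E E (· + ·) (· ≤ ·)] [Module ℝ E]
    -- `E` has the principal projection property:
    (hppp : ∀ x y : E, 0 ≤ y → ∃ s : E, IsLUB {z | ∃ n : ℕ, z = y ⊓ (n • |x|)} s)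
    (a : A) (ha : 0 ≤ a)
    (π : ↥(Submodule.span ℝ ({1, a, a * a} : Set A)) →ₗ[ℝ] E →ₗ[ℝ] E)
    (hπpos : ∀ v : Submodule.span ℝ ({1, a, a * a} : Set A), 0 ≤ (v : A) →
      ∀ x : E, 0 ≤ x → 0 ≤ π v x)
    (hπob : ∀ v, IsOrderBoundedMap (π v))
    (hπ1 : π ⟨1, Submodule.subset_span (by simp)⟩ = LinearMap.id) :
    IsOrthomorphism (π ⟨a, Submodule.subset_span (by simp)⟩) := by
  set va : Submodule.span ℝ ({1, a, a * a} : Set A) := ⟨a, Submodule.subset_span (by simp)⟩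
  set vaa : Submodule.span ℝ ({1, a, a * a} : Set A) :=
    ⟨a * a, Submodule.subset_span (by simp)⟩
  have hTpos : ∀ x : E, 0 ≤ x → 0 ≤ π va x := hπpos va ha
  have hdom : ∀ (n : ℕ) (x : E), 0 ≤ x → n • π va x ≤ (n * n) • x + π vaa x := by
    intro n x hx
    set w := (n * n) • (⟨1, Submodule.subset_span (by simp)⟩ : Submodule.span ℝ _) + vaa
      - n • va
    have hw : 0 ≤ (w : A) :=
      sub_nonneg.2 (nsmul_le_nsmul_one_add_mul_self hmul_pos hf ha n)
    have hπw : π w x = (n * n) • x + π vaa x - n • π va x := by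
      simp only [w, map_sub, map_add, map_nsmul, hπ1, LinearMap.sub_apply, LinearMap.add_apply,
        LinearMap.smul_apply, LinearMap.id_apply]
    exact sub_nonneg.1 (hπw ▸ hπpos w hw x hx)
  refine ⟨hπob va, fun x y hxy => le_antisymm ?_ (le_inf (abs_nonneg _) (abs_nonneg _))⟩
  calc |π va x| ⊓ |y| ≤ π va |x| ⊓ |y| := inf_le_inf_right _ (abs_map_le_map_abs _ hTpos x)
    _ = 0 := inf_eq_zero_of_forall_nsmul_le hppp (abs_nonneg x) (abs_nonneg y)
        (hTpos _ (abs_nonneg x)) hxy fun n => hdom n |x| (abs_nonneg x)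
end

section
/- Let A be an f-algebra with identity element e, and let E be a vector lattice with the principal projection property. Suppose π : A → L_ob(E) is a positive linear map with π(e) = I. Then π(A) is contained in Orth(E), the orthomorphisms on E. -/
open Filter

/-!
For `b ≥ 0` and disjoint `u, v ≥ 0` split `b = b ⊓ n + (b - n)⁺`. The first piece sends `u`
below `n • u`, which is disjoint from `v`; in an `f`-algebra `n (b - n)⁺ ≤ b²`, so
`n • (π b u ⊓ v) ≤ π (b²) u` for every `n`. The supremum of these multiples, which exists by the
principal projection property, forces `π b u ⊓ v = 0`. For general `a`, use
`|π a x| ≤ π |a| |x|`.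
-/

section LatticeOrderedGroup

variable {G : Type*} [Lattice G] [AddCommGroup G] [CovariantClass G G (· + ·) (· ≤ ·)]

lemma add_inf_le_inf_add_inf_s1 {u₁ u₂ v : G} (h₁ : 0 ≤ u₁) (h₂ : 0 ≤ u₂) (hv : 0 ≤ v) :
    (u₁ + u₂) ⊓ v ≤ u₁ ⊓ v + u₂ ⊓ v := by
  rw [← sub_le_iff_le_add', sub_inf]
  refine sup_le (le_inf ?_ ?_) ((sub_nonpos.mpr inf_le_right).trans (le_inf h₂ hv))
  · exact sub_le_iff_le_add.mpr (add_comm u₁ u₂ ▸ inf_le_left)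
  · exact (sub_le_self _ h₁).trans inf_le_right

lemma nsmul_inf_eq_zero_s1 {u v : G} (hu : 0 ≤ u) (hv : 0 ≤ v) (huv : u ⊓ v = 0) (n : ℕ) :
    n • u ⊓ v = 0 := by
  induction n with
  | zero => simpa using hv
  | succ n ih =>
    refine le_antisymm ?_ (le_inf (nsmul_nonneg hu _) hv)
    calc (n + 1) • u ⊓ v ≤ n • u ⊓ v + u ⊓ v :=
          succ_nsmul u n ▸ add_inf_le_inf_add_inf_s1 (nsmul_nonneg hu n) hu hv
      _ = 0 := by rw [ih, huv, add_zero]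

lemma nonpos_of_isLUB_range_nsmul {z s : G} (hs : IsLUB (Set.range fun n : ℕ => n • z) s) :
    z ≤ 0 := by
  have : s ≤ s - z := hs.2 <| Set.forall_mem_range.mpr fun n =>
    le_sub_iff_add_le.mpr (succ_nsmul z n ▸ hs.1 ⟨n + 1, rfl⟩)
  simpa using this

lemma eq_zero_of_nsmul_le_of_isLUB {z w s : G} (hz : 0 ≤ z) (hzw : ∀ n : ℕ, n • z ≤ w)
    (hs : IsLUB {t | ∃ n : ℕ, t = w ⊓ n • |z|} s) : z = 0 := by
  have hset : {t | ∃ n : ℕ, t = w ⊓ n • |z|} = Set.range fun n : ℕ => n • z := by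
    ext t
    simp only [Set.mem_ofPred_eq, Set.mem_range, abs_of_nonneg hz, inf_eq_right.mpr (hzw _),
      eq_comm]
  exact le_antisymm (nonpos_of_isLUB_range_nsmul (hset ▸ hs)) hz

end LatticeOrderedGroup

namespace FAlgebra

variable {A : Type*} [Lattice A] [Ring A]

lemma mul_eq_zero_of_inf_eq_zero
    (hf : ∀ a b c : A, a ⊓ b = 0 → 0 ≤ c → (c * a) ⊓ b = 0 ∧ (a * c) ⊓ b = 0)
    {a b : A} (ha : 0 ≤ a) (hb : 0 ≤ b) (hab : a ⊓ b = 0) : b * a = 0 := by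
  have hba : b * a ⊓ a = 0 := (hf b a a (inf_comm a b ▸ hab) ha).2
  simpa using (hf a (b * a) b (inf_comm (b * a) a ▸ hba) hb).1

lemma one_nonneg [CovariantClass A A (· + ·) (· ≤ ·)]
    (hmul_pos : ∀ a b : A, 0 ≤ a → 0 ≤ b → 0 ≤ a * b)
    (hf : ∀ a b c : A, a ⊓ b = 0 → 0 ≤ c → (c * a) ⊓ b = 0 ∧ (a * c) ⊓ b = 0) :
    (0 : A) ≤ 1 := by
  have hprod : (1 : A)⁻ * 1⁺ = 0 := mul_eq_zero_of_inf_eq_zero hf (posPart_nonneg 1)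
    (negPart_nonneg 1) (posPart_inf_negPart_eq_zero 1)
  have hneg : (1 : A)⁻ = -(1⁻ * 1⁻) :=
    calc (1 : A)⁻ = 1⁻ * (1⁺ - 1⁻) := by rw [posPart_sub_negPart, mul_one]
      _ = -(1⁻ * 1⁻) := by rw [mul_sub, hprod, zero_sub]
  have hzero : (1 : A)⁻ = 0 := le_antisymm
    (hneg ▸ neg_nonpos.mpr (hmul_pos _ _ (negPart_nonneg 1) (negPart_nonneg 1)))
    (negPart_nonneg 1)
  calc (0 : A) ≤ 1⁺ := posPart_nonneg 1
    _ = 1 := by rw [← sub_zero (1 : A)⁺, ← hzero, posPart_sub_negPart]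

lemma mul_posPart_sub_le_mul_self [CovariantClass A A (· + ·) (· ≤ ·)]
    (hmul_pos : ∀ a b : A, 0 ≤ a → 0 ≤ b → 0 ≤ a * b)
    (hf : ∀ a b c : A, a ⊓ b = 0 → 0 ≤ c → (c * a) ⊓ b = 0 ∧ (a * c) ⊓ b = 0)
    {b c : A} (hb : 0 ≤ b) (hc : 0 ≤ c) : c * (b - c)⁺ ≤ b * b := by
  have hd : 0 ≤ (b - c)⁺ := posPart_nonneg _
  have hed : (b - c)⁻ * (b - c)⁺ = 0 := mul_eq_zero_of_inf_eq_zero hf hd (negPart_nonneg _)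
    (posPart_inf_negPart_eq_zero _)
  have hbd : b * (b - c)⁺ = (b - c)⁺ * (b - c)⁺ + c * (b - c)⁺ :=
    calc b * (b - c)⁺ = ((b - c)⁺ - (b - c)⁻ + c) * (b - c)⁺ := by
          rw [posPart_sub_negPart, sub_add_cancel]
      _ = (b - c)⁺ * (b - c)⁺ + c * (b - c)⁺ := by rw [add_mul, sub_mul, hed, sub_zero]
  have hinf : b - (b - c)⁺ = b ⊓ c := (inf_eq_sub_posPart_sub b c).symm
  calc c * (b - c)⁺ ≤ b * (b - c)⁺ := hbd ▸ le_add_of_nonneg_left (hmul_pos _ _ hd hd)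
    _ ≤ b * b := sub_nonneg.mp (mul_sub b b _ ▸ hinf ▸ hmul_pos _ _ hb (le_inf hb hc))

end FAlgebra

section PositiveRepresentation

variable {A E : Type*} [Lattice A] [Ring A] [Module ℝ A]
  [Lattice E] [AddCommGroup E] [CovariantClass E E (· + ·) (· ≤ ·)] [Module ℝ E]
  {π : A →ₗ[ℝ] E →ₗ[ℝ] E}

lemma apply_le_apply_of_le [CovariantClass A A (· + ·) (· ≤ ·)]
    (hπpos : ∀ a : A, 0 ≤ a → ∀ x : E, 0 ≤ x → 0 ≤ π a x)
    {b c : A} (hbc : b ≤ c) {x : E} (hx : 0 ≤ x) : π b x ≤ π c x := by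
  simpa using hπpos (c - b) (sub_nonneg.mpr hbc) x hx

lemma apply_le_apply_of_nonneg (hπpos : ∀ a : A, 0 ≤ a → ∀ x : E, 0 ≤ x → 0 ≤ π a x)
    {b : A} (hb : 0 ≤ b) {x y : E} (hxy : x ≤ y) : π b x ≤ π b y := by
  simpa using hπpos b hb (y - x) (sub_nonneg.mpr hxy)

lemma abs_apply_le_apply_abs (hπpos : ∀ a : A, 0 ≤ a → ∀ x : E, 0 ≤ x → 0 ≤ π a x)
    {b : A} (hb : 0 ≤ b) (x : E) : |π b x| ≤ π b |x| :=
  abs_le'.mpr ⟨apply_le_apply_of_nonneg hπpos hb (le_abs_self x),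
    map_neg (π b) x ▸ apply_le_apply_of_nonneg hπpos hb (neg_le_abs x)⟩

lemma abs_apply_le_apply_abs_abs [CovariantClass A A (· + ·) (· ≤ ·)]
    (hπpos : ∀ a : A, 0 ≤ a → ∀ x : E, 0 ≤ x → 0 ≤ π a x)
    (a : A) (x : E) : |π a x| ≤ π |a| |x| :=
  calc |π a x| = |π a⁺ x - π a⁻ x| := by
        rw [← LinearMap.sub_apply, ← map_sub, posPart_sub_negPart]
    _ ≤ |π a⁺ x| + |π a⁻ x| := by
        simpa only [sub_eq_add_neg, abs_neg] using abs_add_le (π a⁺ x) (-π a⁻ x)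
    _ ≤ π a⁺ |x| + π a⁻ |x| := add_le_add (abs_apply_le_apply_abs hπpos (posPart_nonneg a) x)
        (abs_apply_le_apply_abs hπpos (negPart_nonneg a) x)
    _ = π |a| |x| := by rw [← LinearMap.add_apply, ← map_add, posPart_add_negPart]

lemma nsmul_apply_inf_le [CovariantClass A A (· + ·) (· ≤ ·)]
    (hmul_pos : ∀ a b : A, 0 ≤ a → 0 ≤ b → 0 ≤ a * b)
    (hf : ∀ a b c : A, a ⊓ b = 0 → 0 ≤ c → (c * a) ⊓ b = 0 ∧ (a * c) ⊓ b = 0)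
    (hπpos : ∀ a : A, 0 ≤ a → ∀ x : E, 0 ≤ x → 0 ≤ π a x) (hπ1 : π 1 = LinearMap.id)
    {b : A} (hb : 0 ≤ b) {u v : E} (hu : 0 ≤ u) (hv : 0 ≤ v) (huv : u ⊓ v = 0) (n : ℕ) :
    n • (π b u ⊓ v) ≤ π (b * b) u := by
  set c : A := n • 1
  have hc : 0 ≤ c := nsmul_nonneg (FAlgebra.one_nonneg hmul_pos hf) n
  have hlow : π (b ⊓ c) u ⊓ v = 0 := by
    have hπc : π c u = n • u := by
      rw [map_nsmul, LinearMap.smul_apply, hπ1, LinearMap.id_apply]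
    refine le_antisymm ?_ (le_inf (hπpos _ (le_inf hb hc) u hu) hv)
    calc π (b ⊓ c) u ⊓ v ≤ n • u ⊓ v :=
          inf_le_inf_right v (hπc ▸ apply_le_apply_of_le hπpos inf_le_right hu)
      _ = 0 := nsmul_inf_eq_zero_s1 hu hv huv n
  have hhigh : π b u ⊓ v ≤ π (b - c)⁺ u := by
    have hsplit : π b u = π (b ⊓ c) u + π (b - c)⁺ u := by
      rw [← LinearMap.add_apply, ← map_add, inf_eq_sub_posPart_sub, sub_add_cancel]
    calc π b u ⊓ v ≤ π (b ⊓ c) u ⊓ v + π (b - c)⁺ u ⊓ v := hsplit ▸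
          add_inf_le_inf_add_inf_s1 (hπpos _ (le_inf hb hc) u hu) (hπpos _ (posPart_nonneg _) u hu) hv
      _ ≤ π (b - c)⁺ u := by rw [hlow, zero_add]; exact inf_le_left
  calc n • (π b u ⊓ v) ≤ n • π (b - c)⁺ u := nsmul_le_nsmul_right hhigh n
    _ = π (c * (b - c)⁺) u := by
        rw [smul_mul_assoc, one_mul, map_nsmul, LinearMap.smul_apply]
    _ ≤ π (b * b) u := apply_le_apply_of_le hπpos
        (FAlgebra.mul_posPart_sub_le_mul_self hmul_pos hf hb hc) hu

lemma apply_inf_eq_zero_of_inf_eq_zero [CovariantClass A A (· + ·) (· ≤ ·)]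
    (hmul_pos : ∀ a b : A, 0 ≤ a → 0 ≤ b → 0 ≤ a * b)
    (hf : ∀ a b c : A, a ⊓ b = 0 → 0 ≤ c → (c * a) ⊓ b = 0 ∧ (a * c) ⊓ b = 0)
    (hppp : ∀ x y : E, 0 ≤ y → ∃ s : E, IsLUB {z | ∃ n : ℕ, z = y ⊓ (n • |x|)} s)
    (hπpos : ∀ a : A, 0 ≤ a → ∀ x : E, 0 ≤ x → 0 ≤ π a x) (hπ1 : π 1 = LinearMap.id)
    {b : A} (hb : 0 ≤ b) {u v : E} (hu : 0 ≤ u) (hv : 0 ≤ v) (huv : u ⊓ v = 0) :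
    π b u ⊓ v = 0 := by
  have hle := nsmul_apply_inf_le hmul_pos hf hπpos hπ1 hb hu hv huv
  obtain ⟨s, hs⟩ := hppp (π b u ⊓ v) (π (b * b) u) (by simpa using hle 0)
  exact eq_zero_of_nsmul_le_of_isLUB (le_inf (hπpos b hb u hu) hv) hle hs

end PositiveRepresentation

/-- Let `A` be an `f`-algebra with identity element `1`, and `E` a
vector lattice with the principal projection property.  If `π : A → L_ob(E)` is a
positive linear map with `π 1 = I`, then `π(A) ⊆ Orth(E)`. -/
theorem stmt1 {A E : Type*}
    [Lattice A] [Ring A] [Module ℝ A] [CovariantClass A A (· + ·) (· ≤ ·)]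
    -- `A` is an `f`-algebra:
    (hmul_pos : ∀ a b : A, 0 ≤ a → 0 ≤ b → 0 ≤ a * b)
    (hf : ∀ a b c : A, a ⊓ b = 0 → 0 ≤ c → (c * a) ⊓ b = 0 ∧ (a * c) ⊓ b = 0)
    [Lattice E] [AddCommGroup E] [CovariantClass E E (· + ·) (· ≤ ·)] [Module ℝ E]
    -- `E` has the principal projection property:
    (hppp : ∀ x y : E, 0 ≤ y → ∃ s : E, IsLUB {z | ∃ n : ℕ, z = y ⊓ (n • |x|)} s)
    (π : A →ₗ[ℝ] E →ₗ[ℝ] E)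
    (hπpos : ∀ a : A, 0 ≤ a → ∀ x : E, 0 ≤ x → 0 ≤ π a x)
    (hπob : ∀ a : A, IsOrderBoundedMap (π a))
    (hπ1 : π 1 = LinearMap.id) :
    ∀ a : A, IsOrthomorphism (π a) := by
  intro a
  refine ⟨hπob a, fun x y hxy => le_antisymm ?_ (le_inf (abs_nonneg _) (abs_nonneg _))⟩
  calc |π a x| ⊓ |y| ≤ π |a| |x| ⊓ |y| :=
        inf_le_inf_right _ (abs_apply_le_apply_abs_abs hπpos a x)
    _ = 0 := apply_inf_eq_zero_of_inf_eq_zero hmul_pos hf hppp hπpos hπ1 (abs_nonneg a)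
        (abs_nonneg x) (abs_nonneg y) hxy
end

section
/- There exists a Dedekind complete Banach lattice E (namely E = ℓ_∞) and an order bounded linear operator T on E such that left multiplication λ_T : L_ob(E) → L_ob(E) is not order continuous. Specifically, taking f a positive extension to ℓ_∞ of the limit functional on c, and T x = f(x) e₁, there is an increasing sequence (S_n) in L_ob(E) with S_n ↑ S but T S_n = 0 for all n while T S ≠ 0. -/
open Filter

/-- `(𝕃, j)` is a realization of the vector lattice `L_ob(E)` of order bounded
linear operators on `E`: `j` is an injective linear map onto the order bounded
operators, and the order of `𝕃` is the operator order. -/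
structure IsLobLattice (E 𝕃 : Type*) [Lattice E] [AddCommGroup E]
    [CovariantClass E E (· + ·) (· ≤ ·)] [Module ℝ E]
    [Lattice 𝕃] [AddCommGroup 𝕃] [Module ℝ 𝕃]
    (j : 𝕃 →ₗ[ℝ] E →ₗ[ℝ] E) : Prop where
  inj : Function.Injective j
  mem_range_iff : ∀ f : E →ₗ[ℝ] E, (∃ S, j S = f) ↔ IsOrderBoundedMap f
  le_iff : ∀ S T : 𝕃, S ≤ T ↔ ∀ x : E, 0 ≤ x → j S x ≤ j T x


/-- The standard unit vector `e_n` in `ℓ_∞`, realized as the bounded (continuous)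
functions on the discrete space `ℕ`. -/
noncomputable def eVec (n : ℕ) : BoundedContinuousFunction ℕ ℝ :=
  ⟨⟨fun m => if m = n then (1 : ℝ) else 0, continuous_of_discreteTopology⟩, 2, by
    intro x y
    simp only [ContinuousMap.coe_mk]
    rw [Real.dist_eq]
    split_ifs <;> norm_num⟩

/-! The functional `f` is the limit along an ultrafilter finer than `atTop`: it is positive,
extends `lim` on `c`, and vanishes on the indicators `vₙ` of `{0, …, n}`, while `f 1 = 1`.
Since `vₙ ↑ 1` but `T vₙ = 0` and `T 1 = e₀`, and since a constant net order converges only to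
its own value, `T` is not order continuous. Likewise the rank-one operators `Sₙ x = x₀ • vₙ`
increase to `S x = x₀ • 1` in `L_ob(E)`, yet `T Sₙ = 0` while `T S x = x₀ • e₀`. -/

open Set Topology

theorem LinearMap.comp_smulRight {R M₁ M N : Type*} [CommSemiring R] [AddCommMonoid M₁]
    [AddCommMonoid M] [AddCommMonoid N] [Module R M₁] [Module R M] [Module R N]
    (T : M →ₗ[R] N) (φ : M₁ →ₗ[R] R) (w : M) : T ∘ₗ φ.smulRight w = φ.smulRight (T w) := by
  ext x
  simp

section OrderConvergence

variable {E : Type*} [Lattice E] [AddCommGroup E] [CovariantClass E E (· + ·) (· ≤ ·)]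
  {ι : Type*} [Preorder ι]

theorem OrderTendsto.eq_of_const {c l : E} (h : OrderTendsto (fun _ : ι => c) l) : c = l := by
  obtain ⟨D, -, -, hglb, hbound⟩ := h
  have hle : |c - l| ≤ 0 := hglb.2 fun d hd => by
    obtain ⟨i, hi⟩ := hbound d hd
    exact hi i le_rfl
  exact sub_eq_zero.mp <|
    le_antisymm ((le_abs_self _).trans hle) (neg_nonpos.mp ((neg_le_abs _).trans hle))

theorem OrderTendsto.of_monotone_isLUB [Nonempty ι] [IsDirected ι (· ≤ ·)] {x : ι → E} {l : E}
    (hx : Monotone x) (hl : IsLUB (range x) l) : OrderTendsto x l := by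
  have hxl : ∀ i, x i ≤ l := fun i => hl.1 (mem_range_self i)
  refine ⟨range fun i => l - x i, range_nonempty _, ?_, ⟨?_, ?_⟩, ?_⟩
  · rintro _ ⟨i, rfl⟩ _ ⟨k, rfl⟩
    obtain ⟨m, him, hkm⟩ := directed_of (· ≤ ·) i k
    exact ⟨_, mem_range_self m, sub_le_sub_left (hx him) l, sub_le_sub_left (hx hkm) l⟩
  · rintro _ ⟨i, rfl⟩
    exact sub_nonneg.mpr (hxl i)
  · intro c hc
    have hl' : l ≤ l - c := hl.2 <| forall_mem_range.mpr fun i =>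
      le_sub_comm.mp (hc (mem_range_self i))
    simpa using hl'
  · rintro _ ⟨i, rfl⟩
    refine ⟨i, fun k hik => ?_⟩
    rw [abs_of_nonpos (sub_nonpos.mpr (hxl k)), neg_sub]
    exact sub_le_sub_left (hx hik) l

variable [Module ℝ E]

theorem IsOrderContinuousMap.eq_zero_of_isLUB {f : E →ₗ[ℝ] E} (hf : IsOrderContinuousMap f)
    {x : ℕ → E} {l : E} (hx : Monotone x) (hl : IsLUB (range x) l) (hfx : ∀ n, f (x n) = 0) :
    f l = 0 := by
  -- `hf` speaks only about index types in its own universe.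
  have hx' : Monotone fun n : ULift ℕ => x n.down := fun _ _ h => hx h
  have hl' : IsLUB (range fun n : ULift ℕ => x n.down) l := by
    rwa [← ULift.down_surjective.range_comp x] at hl
  have := hf _ l (OrderTendsto.of_monotone_isLUB hx' hl')
  simp only [hfx] at this
  exact this.eq_of_const.symm

theorem isOrderBoundedMap_smulRight [SMulPosMono ℝ E] {φ : E →ₗ[ℝ] ℝ} (hφ : Monotone φ)
    {w : E} (hw : 0 ≤ w) : IsOrderBoundedMap (φ.smulRight w) := by
  refine fun x _ => ⟨φ x • w, fun y ⟨hxy, hyx⟩ => abs_le'.mpr ⟨?_, ?_⟩⟩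
  · exact smul_le_smul_of_nonneg_right (hφ hyx) hw
  · rw [LinearMap.smulRight_apply, ← neg_smul, ← map_neg]
    exact smul_le_smul_of_nonneg_right (hφ (neg_le.mp hxy)) hw

end OrderConvergence

namespace IsLobLattice

variable {E 𝕃 : Type*} [Lattice E] [AddCommGroup E] [CovariantClass E E (· + ·) (· ≤ ·)]
  [Module ℝ E] [Lattice 𝕃] [AddCommGroup 𝕃] [Module ℝ 𝕃] {j : 𝕃 →ₗ[ℝ] E →ₗ[ℝ] E}
  {ι : Type*} {S : ι → 𝕃}

theorem monotone_of_forall_monotone [Preorder ι] (hj : IsLobLattice E 𝕃 j)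
    (h : ∀ x, 0 ≤ x → Monotone fun i => j (S i) x) : Monotone S :=
  fun _ _ hik => (hj.le_iff _ _).mpr fun x hx => h x hx hik

theorem isLUB_range_of_forall_isLUB (hj : IsLobLattice E 𝕃 j) {S' : 𝕃}
    (h : ∀ x, 0 ≤ x → IsLUB (range fun i => j (S i) x) (j S' x)) : IsLUB (range S) S' := by
  refine ⟨forall_mem_range.mpr fun i => (hj.le_iff _ _).mpr fun x hx =>
    (h x hx).1 (mem_range_self i), fun u hu => (hj.le_iff _ _).mpr fun x hx => ?_⟩
  exact (h x hx).2 <| forall_mem_range.mpr fun i =>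
    (hj.le_iff _ _).mp (hu (mem_range_self i)) x hx

end IsLobLattice

namespace BoundedContinuousFunction

variable {α : Type*} [TopologicalSpace α]

instance : PosSMulMono ℝ (α →ᵇ ℝ) :=
  ⟨fun _ hc _ _ h x => mul_le_mul_of_nonneg_left (h x) hc⟩

instance : SMulPosMono ℝ (α →ᵇ ℝ) :=
  ⟨fun _ hw _ _ h x => mul_le_mul_of_nonneg_right h (hw x)⟩

theorem le_def {f g : α →ᵇ ℝ} : f ≤ g ↔ ∀ a, f a ≤ g a := Iff.rfl

theorem isLUB_range_of_forall_exists_eq {ι : Type*} {x : ι → α →ᵇ ℝ} {g : α →ᵇ ℝ}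
    (hle : ∀ i, x i ≤ g) (hg : ∀ a, ∃ i, x i a = g a) : IsLUB (range x) g := by
  refine ⟨forall_mem_range.mpr hle, fun u hu => le_def.mpr fun a => ?_⟩
  obtain ⟨i, hi⟩ := hg a
  exact hi.symm.le.trans (le_def.mp (hu (mem_range_self i)) a)

theorem exists_tendsto_ultrafilter (x : α →ᵇ ℝ) (U : Ultrafilter α) :
    ∃ L, Tendsto x U (𝓝 L) := by
  obtain ⟨L, -, hL⟩ := (isCompact_closedBall (0 : ℝ) ‖x‖).ultrafilter_le_nhds (U.map x) <|
    le_principal_iff.mpr <| mem_map.mpr <| univ_mem' fun a =>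
      mem_closedBall_zero_iff.mpr (x.norm_coe_le_norm a)
  exact ⟨L, hL⟩

noncomputable def ultrafilterLimit (U : Ultrafilter α) : (α →ᵇ ℝ) →ₗ[ℝ] ℝ where
  toFun x := limUnder U x
  map_add' x y := ((tendsto_nhds_limUnder (x.exists_tendsto_ultrafilter U)).add
    (tendsto_nhds_limUnder (y.exists_tendsto_ultrafilter U))).limUnder_eq
  map_smul' c x :=
    ((tendsto_nhds_limUnder (x.exists_tendsto_ultrafilter U)).const_smul c).limUnder_eq

variable (U : Ultrafilter α)

theorem tendsto_ultrafilterLimit (x : α →ᵇ ℝ) : Tendsto x U (𝓝 (ultrafilterLimit U x)) :=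
  tendsto_nhds_limUnder (x.exists_tendsto_ultrafilter U)

theorem ultrafilterLimit_eq_of_tendsto {l : Filter α} (hU : ↑U ≤ l) {x : α →ᵇ ℝ} {L : ℝ}
    (h : Tendsto x l (𝓝 L)) : ultrafilterLimit U x = L :=
  tendsto_nhds_unique (tendsto_ultrafilterLimit U x) (h.mono_left hU)

theorem monotone_ultrafilterLimit : Monotone (ultrafilterLimit U) := fun x y h =>
  le_of_tendsto_of_tendsto' (tendsto_ultrafilterLimit U x) (tendsto_ultrafilterLimit U y)
    (le_def.mp h)

end BoundedContinuousFunction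

open BoundedContinuousFunction

noncomputable def iicIndicator (n : ℕ) : ℕ →ᵇ ℝ :=
  indicator (Iic n) (isClopen_discrete _)

theorem iicIndicator_apply (n m : ℕ) : iicIndicator n m = if m ≤ n then 1 else 0 := by
  simp [iicIndicator, Set.indicator_apply]

theorem iicIndicator_nonneg (n : ℕ) : 0 ≤ iicIndicator n := le_def.mpr fun m => by
  rw [iicIndicator_apply]; split_ifs <;> simp

theorem iicIndicator_le_one (n : ℕ) : iicIndicator n ≤ 1 := le_def.mpr fun m => by
  rw [iicIndicator_apply]; split_ifs <;> simp

theorem iicIndicator_self (n : ℕ) : iicIndicator n n = 1 := by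
  simp [iicIndicator_apply]

theorem monotone_iicIndicator : Monotone iicIndicator := fun n k h => le_def.mpr fun m => by
  simp only [iicIndicator_apply]
  split_ifs <;> first | omega | norm_num

theorem isLUB_range_iicIndicator : IsLUB (range iicIndicator) 1 :=
  isLUB_range_of_forall_exists_eq iicIndicator_le_one fun m => ⟨m, iicIndicator_self m⟩

theorem tendsto_iicIndicator_atTop (n : ℕ) : Tendsto (iicIndicator n) atTop (𝓝 0) :=
  tendsto_const_nhds.congr' <| (eventually_gt_atTop n).mono fun m hm => by
    simp [iicIndicator_apply, not_le.mpr hm]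

noncomputable def evalZeroSmulRight (w : ℕ →ᵇ ℝ) : (ℕ →ᵇ ℝ) →ₗ[ℝ] ℕ →ᵇ ℝ :=
  (evalCLM ℝ 0 : (ℕ →ᵇ ℝ) →L[ℝ] ℝ).toLinearMap.smulRight w

theorem evalZeroSmulRight_apply (w x : ℕ →ᵇ ℝ) : evalZeroSmulRight w x = x 0 • w := rfl

theorem isOrderBoundedMap_evalZeroSmulRight {w : ℕ →ᵇ ℝ} (hw : 0 ≤ w) :
    IsOrderBoundedMap (evalZeroSmulRight w) :=
  isOrderBoundedMap_smulRight (fun _ _ h => le_def.mp h 0) hw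

theorem monotone_evalZeroSmulRight_iicIndicator {x : ℕ →ᵇ ℝ} (hx : 0 ≤ x) :
    Monotone fun n => evalZeroSmulRight (iicIndicator n) x :=
  monotone_iicIndicator.const_smul (le_def.mp hx 0)

theorem isLUB_range_evalZeroSmulRight_iicIndicator {x : ℕ →ᵇ ℝ} (hx : 0 ≤ x) :
    IsLUB (range fun n => evalZeroSmulRight (iicIndicator n) x) (evalZeroSmulRight 1 x) :=
  isLUB_range_of_forall_exists_eq
    (fun n => smul_le_smul_of_nonneg_left (iicIndicator_le_one n) (le_def.mp hx 0))
    fun m => ⟨m, by simp [evalZeroSmulRight_apply, iicIndicator_self]⟩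

theorem eVec_self (n : ℕ) : eVec n n = 1 := if_pos rfl

theorem eVec_nonneg (n : ℕ) : 0 ≤ eVec n := le_def.mpr fun m => by
  by_cases h : m = n <;> simp [eVec, h]

theorem eVec_ne_zero (n : ℕ) : eVec n ≠ 0 := fun h => by
  simpa [eVec_self] using DFunLike.congr_fun h n

/-- On the Dedekind complete Banach lattice `E = ℓ_∞` there is an
order bounded operator `T` whose left multiplication `λ_T` on `L_ob(E)` is not order
continuous.  Specifically: there is a positive linear functional `f` on `ℓ_∞`
extending the limit functional on `c`; for the operator `T x = f(x) • e₀` (which is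
order bounded) there is an increasing sequence `(S_n)` in `L_ob(E)` with `S_n ↑ S`
while `T ∘ S_n = 0` for all `n` and `T ∘ S ≠ 0`; consequently, in any realization
`(𝕃, j)` of `L_ob(E)`, the lifted sequence order converges to the lift of `S`,
whereas its image under `λ_T` does not order converge to the image of `S`. -/
theorem stmt4 :
    ∃ f : BoundedContinuousFunction ℕ ℝ →ₗ[ℝ] ℝ,
      (∀ x : BoundedContinuousFunction ℕ ℝ, 0 ≤ x → 0 ≤ f x) ∧
      (∀ (x : BoundedContinuousFunction ℕ ℝ) (L : ℝ),
        Filter.Tendsto (fun n => x n) Filter.atTop (nhds L) → f x = L) ∧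
      ∀ T : BoundedContinuousFunction ℕ ℝ →ₗ[ℝ] BoundedContinuousFunction ℕ ℝ,
        (∀ x, T x = f x • eVec 0) →
        IsOrderBoundedMap T ∧ ¬ IsOrderContinuousMap T ∧
        ∃ S : ℕ → (BoundedContinuousFunction ℕ ℝ →ₗ[ℝ] BoundedContinuousFunction ℕ ℝ),
          ∃ Slim : BoundedContinuousFunction ℕ ℝ →ₗ[ℝ] BoundedContinuousFunction ℕ ℝ,
          (∀ n, IsOrderBoundedMap (S n)) ∧ IsOrderBoundedMap Slim ∧
          -- `S_n ↑ Slim` in `L_ob(E)` (pointwise on positive vectors):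
          (∀ x, 0 ≤ x → Monotone fun n => S n x) ∧
          (∀ x, 0 ≤ x → IsLUB (Set.range fun n => S n x) (Slim x)) ∧
          (∀ n, T ∘ₗ S n = 0) ∧ T ∘ₗ Slim ≠ 0 ∧
          -- hence `λ_T` is not order continuous on `L_ob(E)`:
          ∀ (𝕃 : Type) [Lattice 𝕃] [AddCommGroup 𝕃]
            [CovariantClass 𝕃 𝕃 (· + ·) (· ≤ ·)] [Module ℝ 𝕃]
            (j : 𝕃 →ₗ[ℝ] BoundedContinuousFunction ℕ ℝ →ₗ[ℝ]
              BoundedContinuousFunction ℕ ℝ),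
            IsLobLattice (BoundedContinuousFunction ℕ ℝ) 𝕃 j →
            ∀ (Sl : ℕ → 𝕃) (Sliml : 𝕃) (Cl : ℕ → 𝕃) (Climl : 𝕃),
              (∀ n, j (Sl n) = S n) → j Sliml = Slim →
              (∀ n, j (Cl n) = T ∘ₗ S n) → j Climl = T ∘ₗ Slim →
              OrderTendsto Sl Sliml ∧ ¬ OrderTendsto Cl Climl := by
  set f := ultrafilterLimit (.of (atTop : Filter ℕ))
  have hf_lim : ∀ (x : ℕ →ᵇ ℝ) (L : ℝ), Tendsto (fun n => x n) atTop (𝓝 L) → f x = L :=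
    fun _ _ => ultrafilterLimit_eq_of_tendsto _ (Ultrafilter.of_le _)
  refine ⟨f, fun x hx => by simpa using monotone_ultrafilterLimit _ hx, hf_lim, fun T hT => ?_⟩
  have hT_iic (n : ℕ) : T (iicIndicator n) = 0 := by
    rw [hT, hf_lim _ _ (tendsto_iicIndicator_atTop n), zero_smul]
  have hT_one : T 1 = eVec 0 := by
    rw [hT, show f 1 = 1 from hf_lim _ _ tendsto_const_nhds, one_smul]
  have hTS (n : ℕ) : T ∘ₗ evalZeroSmulRight (iicIndicator n) = 0 := by
    rw [evalZeroSmulRight, LinearMap.comp_smulRight, hT_iic, LinearMap.smulRight_zero]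
  have hTS_one : T ∘ₗ evalZeroSmulRight 1 ≠ 0 := fun h => eVec_ne_zero 0 <| by
    simpa [evalZeroSmulRight_apply, hT_one] using DFunLike.congr_fun h 1
  have hT_eq : T = f.smulRight (eVec 0) := LinearMap.ext hT
  refine ⟨hT_eq ▸ isOrderBoundedMap_smulRight (monotone_ultrafilterLimit _) (eVec_nonneg 0),
    fun hT_cont => eVec_ne_zero 0 (hT_one ▸ hT_cont.eq_zero_of_isLUB monotone_iicIndicator
      isLUB_range_iicIndicator hT_iic),
    fun n => evalZeroSmulRight (iicIndicator n), evalZeroSmulRight 1,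
    fun n => isOrderBoundedMap_evalZeroSmulRight (iicIndicator_nonneg n),
    isOrderBoundedMap_evalZeroSmulRight (le_def.mpr fun _ => zero_le_one),
    fun _ => monotone_evalZeroSmulRight_iicIndicator,
    fun _ => isLUB_range_evalZeroSmulRight_iicIndicator,
    hTS, hTS_one, ?_⟩
  intro 𝕃 _ _ _ _ j hj Sl Sliml Cl Climl hSl hSliml hCl hCliml
  refine ⟨.of_monotone_isLUB (hj.monotone_of_forall_monotone ?_)
    (hj.isLUB_range_of_forall_isLUB ?_), fun h => hTS_one ?_⟩
  · simpa only [hSl] using fun _ => monotone_evalZeroSmulRight_iicIndicator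
  · simpa only [hSl, hSliml] using fun _ => isLUB_range_evalZeroSmulRight_iicIndicator
  · obtain rfl : Cl = fun _ => 0 :=
      funext fun n => (map_eq_zero_iff j hj.inj).mp ((hCl n).trans (hTS n))
    rw [← hCliml, ← h.eq_of_const, map_zero]
end

section
/- Let E = L_p[0,1] with 1 ≤ p < ∞. Define for n ≥ 1 the positive operator S_n on E by (S_n f)(t) = f(t + 1/n) for t ∈ [0, (n−1)/n) and (S_n f)(t) = f(t − (n−1)/n) for t ∈ [(n−1)/n, 1]. Then (S_n) is a disjoint sequence in L_ob(E): S_m ∧ S_n = 0 whenever m ≠ n. -/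
open Filter

open MeasureTheory ENNReal Set

/-!
Write `τ_a` for the rotation of `[0, 1)` by `a`, so that `S_n f = f ∘ τ_{1/n}` almost everywhere.
For `m ≠ n` the points `τ_{1/m} t` and `τ_{1/n} t` differ for every `t`. Fix a countable family
of measurable sets separating the points of `ℝ`. For each set `s` of the family, split
`x = 1_s x + 1_{sᶜ} x`; then a lower bound `b` of the Riesz–Kantorovich set satisfies
`b t ≤ (1_s x)(τ_{1/m} t) + (1_{sᶜ} x)(τ_{1/n} t)` almost everywhere. By countability this holds
for all `s` (and their complements) at once, and a set that contains exactly one of the two points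
makes the right-hand side vanish, so `b ≤ 0`.
-/

/-- The infimum of this set is `(S ⊓ T) x` by the Riesz–Kantorovich formula. -/
def rieszKantorovichSet {E : Type*} [AddCommMonoid E] [Preorder E] [Module ℝ E]
    (S T : E →ₗ[ℝ] E) (x : E) : Set E :=
  {v | ∃ y z : E, 0 ≤ y ∧ 0 ≤ z ∧ y + z = x ∧ v = S y + T z}

namespace MeasureTheory.Lp

variable {α : Type*} [MeasurableSpace α] {μ : Measure α} {p : ℝ≥0∞}
  {φ ψ : α → α} {S T : Lp ℝ p μ →ₗ[ℝ] Lp ℝ p μ}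

theorem nonneg_of_ae_eq_comp (hφ : Measure.QuasiMeasurePreserving φ μ μ) {f g : Lp ℝ p μ}
    (hg : g =ᵐ[μ] f ∘ φ) (hf : 0 ≤ f) : 0 ≤ g := by
  refine (coeFn_nonneg _).mp ?_
  filter_upwards [hg, hφ.ae ((coeFn_nonneg f).mpr hf)] with t hgt hft
  simpa [hgt] using hft

theorem toLp_indicator_nonneg {x : Lp ℝ p μ} (hx : 0 ≤ x) {s : Set α} (hs : MeasurableSet s) :
    0 ≤ ((Lp.memLp x).indicator hs).toLp (s.indicator x) := by
  have hxs : ((Lp.memLp x).indicator hs).toLp (s.indicator x) =ᵐ[μ] s.indicator x :=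
    MemLp.coeFn_toLp _
  refine (coeFn_nonneg _).mp ?_
  filter_upwards [hxs, (coeFn_nonneg x).mpr hx] with t ht hxt
  rw [ht]
  exact indicator_nonneg (fun _ _ => hxt) t

theorem ae_le_indicator_comp_add_indicator_compl_comp
    (hφ : Measure.QuasiMeasurePreserving φ μ μ) (hψ : Measure.QuasiMeasurePreserving ψ μ μ)
    (hS : ∀ f, S f =ᵐ[μ] f ∘ φ) (hT : ∀ f, T f =ᵐ[μ] f ∘ ψ) {x b : Lp ℝ p μ} (hx : 0 ≤ x)
    (hb : b ∈ lowerBounds (rieszKantorovichSet S T x)) {s : Set α} (hs : MeasurableSet s) :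
    ∀ᵐ t ∂μ, b t ≤ s.indicator x (φ t) + sᶜ.indicator x (ψ t) := by
  set y := ((Lp.memLp x).indicator hs).toLp (s.indicator x)
  set z := ((Lp.memLp x).indicator hs.compl).toLp (sᶜ.indicator x)
  have hy : y =ᵐ[μ] s.indicator x := MemLp.coeFn_toLp _
  have hz : z =ᵐ[μ] sᶜ.indicator x := MemLp.coeFn_toLp _
  have hyz : y + z = x := by
    ext1
    filter_upwards [coeFn_add y z, hy, hz] with t hsum hyt hzt
    rw [hsum, Pi.add_apply, hyt, hzt, indicator_self_add_compl_apply]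
  have hle : b ≤ S y + T z :=
    hb ⟨y, z, toLp_indicator_nonneg hx hs, toLp_indicator_nonneg hx hs.compl, hyz, rfl⟩
  filter_upwards [(coeFn_le _ _).mpr hle, coeFn_add (S y) (T z), hS y, hT z,
    hφ.ae_eq_comp hy, hψ.ae_eq_comp hz] with t hbt hsum hSy hTz hyφ hzψ
  rwa [hsum, Pi.add_apply, hSy, hTz, hyφ, hzψ] at hbt

theorem isGLB_rieszKantorovichSet_of_ae_ne [MeasurableSpace.CountablySeparated α]
    (hφ : Measure.QuasiMeasurePreserving φ μ μ) (hψ : Measure.QuasiMeasurePreserving ψ μ μ)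
    (hS : ∀ f, S f =ᵐ[μ] f ∘ φ) (hT : ∀ f, T f =ᵐ[μ] f ∘ ψ) (hne : ∀ᵐ t ∂μ, φ t ≠ ψ t)
    {x : Lp ℝ p μ} (hx : 0 ≤ x) : IsGLB (rieszKantorovichSet S T x) 0 := by
  refine ⟨?_, fun b hb => ?_⟩
  · rintro v ⟨y, z, hy, hz, -, rfl⟩
    exact add_nonneg (nonneg_of_ae_eq_comp hφ (hS y) hy) (nonneg_of_ae_eq_comp hψ (hT z) hz)
  obtain ⟨C, hCc, hCmeas, hCsep⟩ := exists_countable_separating α MeasurableSet univ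
  have hbC : ∀ᵐ t ∂μ, ∀ s ∈ C, b t ≤ s.indicator x (φ t) + sᶜ.indicator x (ψ t) ∧
      b t ≤ sᶜ.indicator x (φ t) + sᶜᶜ.indicator x (ψ t) := by
    refine (ae_ball_iff hCc).mpr fun s hs => ?_
    have hsm := hCmeas s hs
    exact (ae_le_indicator_comp_add_indicator_compl_comp hφ hψ hS hT hx hb hsm).and
      (ae_le_indicator_comp_add_indicator_compl_comp hφ hψ hS hT hx hb hsm.compl)
  rw [← coeFn_le]
  filter_upwards [hbC, hne, coeFn_zero ℝ p μ] with t hbt hnet h0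
  obtain ⟨s, hsC, hst⟩ : ∃ s ∈ C, ¬(φ t ∈ s ↔ ψ t ∈ s) := by
    by_contra! h
    exact hnet (hCsep _ trivial _ trivial h)
  rw [h0, Pi.zero_apply]
  by_cases hφs : φ t ∈ s
  · have hψs : ψ t ∉ s := fun h => hst (iff_of_true hφs h)
    simpa [hφs, hψs] using (hbt s hsC).2
  · have hψs : ψ t ∈ s := by tauto
    simpa [hφs, hψs] using (hbt s hsC).1

end MeasureTheory.Lp

noncomputable def circleShift (a t : ℝ) : ℝ := if t < 1 - a then t + a else t - (1 - a)

theorem circleShift_one_div {n : ℕ} (hn : n ≠ 0) (t : ℝ) : circleShift (1 / n) t =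
    if t < ((n : ℝ) - 1) / n then t + 1 / n else t - ((n : ℝ) - 1) / n := by
  have : ((n : ℝ) - 1) / n = 1 - 1 / n := by field_simp
  rw [circleShift, this]

theorem circleShift_ne_circleShift {a b : ℝ} (ha : a ∈ Ioc 0 1) (hb : b ∈ Ioc 0 1) (hab : a ≠ b)
    (t : ℝ) : circleShift a t ≠ circleShift b t := by
  -- the difference is `a - b` or `a - b ± 1`, none of which vanishes since `|a - b| < 1`
  obtain ⟨ha0, ha1⟩ := ha
  obtain ⟨hb0, hb1⟩ := hb
  unfold circleShift
  split_ifs <;> intro h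
  · exact hab (by linarith)
  · linarith
  · linarith
  · exact hab (by linarith)

theorem measurable_circleShift (a : ℝ) : Measurable (circleShift a) :=
  Measurable.ite measurableSet_Iio (measurable_add_const a) (measurable_sub_const _)

theorem quasiMeasurePreserving_circleShift {a : ℝ} (ha : a ∈ Icc 0 1) :
    Measure.QuasiMeasurePreserving (circleShift a) (volume.restrict (Icc 0 1))
      (volume.restrict (Icc 0 1)) := by
  -- on `[0, 1]` each branch is a translation with values in `[0, 1]`
  refine ⟨measurable_circleShift a, Measure.AbsolutelyContinuous.mk fun N hN hN0 => ?_⟩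
  rw [Measure.map_apply (measurable_circleShift a) hN,
    Measure.restrict_apply (measurable_circleShift a hN)]
  rw [Measure.restrict_apply hN] at hN0
  refine measure_mono_null (t := (· + a) ⁻¹' (N ∩ Icc 0 1) ∪ (· + -(1 - a)) ⁻¹' (N ∩ Icc 0 1))
    ?_ (measure_union_null ?_ ?_)
  · rintro t ⟨htN, ht0, ht1⟩
    obtain ⟨ha0, ha1⟩ := ha
    simp only [mem_preimage, circleShift] at htN
    split_ifs at htN with hta
    · exact Or.inl ⟨htN, by constructor <;> linarith⟩
    · rw [sub_eq_add_neg] at htN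
      exact Or.inr ⟨htN, by constructor <;> linarith⟩
  all_goals rwa [measure_preimage_add_right]

theorem stmt7_general (p : ℝ≥0∞)
    (S : ℕ → (Lp ℝ p (volume.restrict (Set.Icc (0:ℝ) 1)) →ₗ[ℝ]
      Lp ℝ p (volume.restrict (Set.Icc (0:ℝ) 1))))
    (hSdesc : ∀ n : ℕ, 1 ≤ n → ∀ f : Lp ℝ p (volume.restrict (Set.Icc (0:ℝ) 1)),
      ⇑(S n f) =ᵐ[volume.restrict (Set.Icc (0:ℝ) 1)]
        fun t : ℝ => if t < ((n : ℝ) - 1) / n then f (t + 1 / n)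
          else f (t - ((n : ℝ) - 1) / n)) :
    ∀ m n : ℕ, 1 ≤ m → 1 ≤ n → m ≠ n →
      ∀ x : Lp ℝ p (volume.restrict (Set.Icc (0:ℝ) 1)), 0 ≤ x →
        IsGLB {v | ∃ y z : Lp ℝ p (volume.restrict (Set.Icc (0:ℝ) 1)),
          0 ≤ y ∧ 0 ≤ z ∧ y + z = x ∧ v = S m y + S n z} 0 := by
  intro m n hm hn hmn x hx
  have hS : ∀ k : ℕ, 1 ≤ k → ∀ f, S k f =ᵐ[volume.restrict (Icc 0 1)] f ∘ circleShift (1 / k) :=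
    fun k hk f => (hSdesc k hk f).trans <| .of_eq <| funext fun t => by
      rw [Function.comp_apply, circleShift_one_div (by omega), apply_ite f]
  have hshift_mem : ∀ k : ℕ, 1 ≤ k → (1 / k : ℝ) ∈ Ioc 0 1 := fun k hk =>
    ⟨by positivity, div_le_one_of_le₀ (by exact_mod_cast hk) k.cast_nonneg⟩
  have hshift_ne : (1 / m : ℝ) ≠ 1 / n := by simpa using hmn
  exact Lp.isGLB_rieszKantorovichSet_of_ae_ne
    (quasiMeasurePreserving_circleShift (Ioc_subset_Icc_self (hshift_mem m hm)))
    (quasiMeasurePreserving_circleShift (Ioc_subset_Icc_self (hshift_mem n hn)))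
    (hS m hm) (hS n hn)
    (ae_of_all _ (circleShift_ne_circleShift (hshift_mem m hm) (hshift_mem n hn) hshift_ne)) hx

/-- Let `E = L_p[0,1]`, `1 ≤ p < ∞`, and for `n ≥ 1` let `S_n` be the
positive operator with `(S_n f)(t) = f(t + 1/n)` for `t ∈ [0, (n-1)/n)` and
`(S_n f)(t) = f(t - (n-1)/n)` otherwise.  Then `(S_n)` is a disjoint sequence in
`L_ob(E)`: `S_m ∧ S_n = 0` for `m ≠ n`, where the infimum of two positive operators
is expressed via the Riesz–Kantorovich formula. -/
theorem stmt7 (p : ℝ≥0∞) [Fact (1 ≤ p)] (hp : p ≠ ∞)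
    (S : ℕ → (Lp ℝ p (volume.restrict (Set.Icc (0:ℝ) 1)) →ₗ[ℝ]
      Lp ℝ p (volume.restrict (Set.Icc (0:ℝ) 1))))
    (hSdesc : ∀ n : ℕ, 1 ≤ n → ∀ f : Lp ℝ p (volume.restrict (Set.Icc (0:ℝ) 1)),
      ⇑(S n f) =ᵐ[volume.restrict (Set.Icc (0:ℝ) 1)]
        fun t : ℝ => if t < ((n : ℝ) - 1) / n then f (t + 1 / n)
          else f (t - ((n : ℝ) - 1) / n))
    (hSpos : ∀ n : ℕ, ∀ f, 0 ≤ f → 0 ≤ S n f) :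
    ∀ m n : ℕ, 1 ≤ m → 1 ≤ n → m ≠ n →
      ∀ x : Lp ℝ p (volume.restrict (Set.Icc (0:ℝ) 1)), 0 ≤ x →
        IsGLB {v | ∃ y z : Lp ℝ p (volume.restrict (Set.Icc (0:ℝ) 1)),
          0 ≤ y ∧ 0 ≤ z ∧ y + z = x ∧ v = S m y + S n z} 0 :=
  stmt7_general p S hSdesc
end

section
/- Let E be a Banach lattice and A a subset of E. Then the sequential strong order adherence of A equals the sequential strong order adherence of the norm closure of A: every element that is an order limit in E of a sequence from the norm closure of A is already an order limit of a sequence from A. -/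
open Filter

section Adh
universe u
variable {E : Type*} [Lattice E] [AddCommGroup E]
  [CovariantClass E E (· + ·) (· ≤ ·)]

/-- The order adherence of a set: all order limits of nets from the set. -/
def orderAdherence (A : Set E) : Set E :=
  {l | ∃ (ι : Type u) (_ : Preorder ι) (_ : Nonempty ι),
      (∀ a b : ι, ∃ c : ι, a ≤ c ∧ b ≤ c) ∧
      ∃ x : ι → E, (∀ a, x a ∈ A) ∧ OrderTendsto x l}

/-- The unbounded order adherence of a set. -/
def uoAdherence (A : Set E) : Set E :=
  {l | ∃ (ι : Type u) (_ : Preorder ι) (_ : Nonempty ι),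
      (∀ a b : ι, ∃ c : ι, a ≤ c ∧ b ≤ c) ∧
      ∃ x : ι → E, (∀ a, x a ∈ A) ∧ UOTendsto x l}

/-- The sequential order adherence of a set. -/
def seqOrderAdherence (A : Set E) : Set E :=
  {l | ∃ x : ℕ → E, (∀ n, x n ∈ A) ∧ OrderTendsto x l}

/-- The sequential unbounded order adherence of a set. -/
def seqUOAdherence (A : Set E) : Set E :=
  {l | ∃ x : ℕ → E, (∀ n, x n ∈ A) ∧ UOTendsto x l}

end Adh

/-
Order limits survive norm-small perturbations. If `x n ∈ closure A` order-converges to `l`,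
pick `y n ∈ A` with `‖y n - x n‖ ≤ 2⁻ⁿ`. In a Banach lattice the tails
`z n = ∑_{m ≥ n} |y m - x m|` converge, decrease, dominate `|y n - x n|` and tend to `0` in
norm, so (the norm topology being order closed) `z n ↓ 0`. Hence `y - x` order-converges to
`0`, and `y = x + (y - x)` order-converges to `l`.
-/

open Set Pointwise

section OrderConvergence

variable {E ι : Type*} [Lattice E] [AddCommGroup E] [Preorder ι]

theorem OrderTendsto.add [AddLeftMono E] [IsDirectedOrder ι] {x u : ι → E} {l m : E}
    (hx : OrderTendsto x l) (hu : OrderTendsto u m) : OrderTendsto (x + u) (l + m) := by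
  obtain ⟨D, hDne, hDdir, hDglb, hD⟩ := hx
  obtain ⟨D', hD'ne, hD'dir, hD'glb, hD'⟩ := hu
  refine ⟨D + D', hDne.add hD'ne, ?_, by simpa using hDglb.add hD'glb, ?_⟩
  · rintro _ ⟨d₁, hd₁, e₁, he₁, rfl⟩ _ ⟨d₂, hd₂, e₂, he₂, rfl⟩
    obtain ⟨d, hd, hd₁d, hd₂d⟩ := hDdir d₁ hd₁ d₂ hd₂
    obtain ⟨e, he, he₁e, he₂e⟩ := hD'dir e₁ he₁ e₂ he₂
    exact ⟨d + e, add_mem_add hd he, add_le_add hd₁d he₁e, add_le_add hd₂d he₂e⟩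
  · rintro _ ⟨d, hd, e, he, rfl⟩
    obtain ⟨i, hi⟩ := hD d hd
    obtain ⟨j, hj⟩ := hD' e he
    obtain ⟨k, hik, hjk⟩ := directed_of (· ≤ ·) i j
    refine ⟨k, fun a hka => ?_⟩
    calc |(x + u) a - (l + m)| = |(x a - l) + (u a - m)| := by
          rw [Pi.add_apply, add_sub_add_comm]
      _ ≤ |x a - l| + |u a - m| := abs_add_le _ _
      _ ≤ d + e := add_le_add (hi a (hik.trans hka)) (hj a (hjk.trans hka))

theorem orderTendsto_zero_of_abs_le_of_antitone [IsDirectedOrder ι] [Nonempty ι]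
    {u z : ι → E} (hz : Antitone z) (hz0 : IsGLB (range z) 0) (huz : ∀ i, |u i| ≤ z i) :
    OrderTendsto u 0 := by
  refine ⟨range z, range_nonempty z, directedOn_range.mpr hz.directed_ge, hz0, ?_⟩
  rintro _ ⟨i, rfl⟩
  exact ⟨i, fun j hij => by simpa using (huz j).trans (hz hij)⟩

end OrderConvergence

theorem exists_seq_mem_summable_norm_sub {E : Type*} [SeminormedAddCommGroup E] {A : Set E}
    {x : ℕ → E} (hx : ∀ n, x n ∈ closure A) :
    ∃ y : ℕ → E, (∀ n, y n ∈ A) ∧ Summable fun n => ‖y n - x n‖ := by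
  have hy : ∀ n, ∃ y ∈ A, dist (x n) y < (1 / 2 : ℝ) ^ n := fun n =>
    Metric.mem_closure_iff.mp (hx n) _ (by positivity)
  choose y hyA hy using hy
  refine ⟨y, hyA, summable_geometric_two.of_nonneg_of_le (fun _ => norm_nonneg _) fun n => ?_⟩
  rw [← dist_eq_norm, dist_comm]
  exact (hy n).le

theorem tsum_nat_add_eq_add_tsum_nat_add_succ {G : Type*} [AddCommGroup G] [TopologicalSpace G]
    [IsTopologicalAddGroup G] [T2Space G] {f : ℕ → G} (hf : Summable f) (n : ℕ) :
    ∑' k, f (k + n) = f n + ∑' k, f (k + (n + 1)) := by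
  rw [((summable_nat_add_iff n).mpr hf).tsum_eq_zero_add, zero_add]
  simp only [add_right_comm _ 1 n, add_assoc]

section BanachLattice

variable {E : Type*} [NormedAddCommGroup E] [Lattice E] [HasSolidNorm E] [IsOrderedAddMonoid E]

theorem orderTendsto_zero_of_summable_norm [CompleteSpace E] {u : ℕ → E}
    (hu : Summable fun n => ‖u n‖) : OrderTendsto u 0 := by
  have hf : Summable fun n => |u n| := Summable.of_norm (by simpa only [norm_abs_eq_norm])
  set z : ℕ → E := fun n => ∑' k, |u (k + n)|
  have hz_succ : ∀ n, z n = |u n| + z (n + 1) := tsum_nat_add_eq_add_tsum_nat_add_succ hf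
  have hz_nonneg : ∀ n, 0 ≤ z n := fun n => tsum_nonneg fun _ => abs_nonneg _
  have hz : Antitone z := antitone_nat_of_succ_le fun n => by
    rw [hz_succ n]
    exact le_add_of_nonneg_left (abs_nonneg _)
  refine orderTendsto_zero_of_abs_le_of_antitone hz
    (isGLB_of_tendsto_atTop hz (tendsto_sum_nat_add fun k => |u k|)) fun n => ?_
  rw [hz_succ n]
  exact le_add_of_nonneg_right (hz_nonneg _)

end BanachLattice

theorem seqOrderAdherence_mono {E : Type*} [Lattice E] [AddCommGroup E]
    {A B : Set E} (hAB : A ⊆ B) : seqOrderAdherence A ⊆ seqOrderAdherence B :=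
  fun _ ⟨x, hxA, hx⟩ => ⟨x, fun n => hAB (hxA n), hx⟩

/-- Let `E` be a Banach lattice and `A ⊆ E`.  Then the sequential
order adherence of `A` equals the sequential order adherence of the norm closure of
`A`. -/
theorem stmt18 {E : Type*} [NormedAddCommGroup E] [Lattice E] [HasSolidNorm E]
    [IsOrderedAddMonoid E] [CompleteSpace E]
    (A : Set E) :
    seqOrderAdherence A = seqOrderAdherence (closure A) := by
  refine (seqOrderAdherence_mono subset_closure).antisymm ?_
  rintro l ⟨x, hxA, hx⟩
  obtain ⟨y, hyA, hy⟩ := exists_seq_mem_summable_norm_sub hxA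
  refine ⟨y, hyA, ?_⟩
  simpa [Pi.add_def] using hx.add (orderTendsto_zero_of_summable_norm hy)
end
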